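/- arXiv:0810.2149 — 3 statements merged into one kernel-verified Lean document; each statement's English description precedes it below -/
import Mathlib

section
/- Let α, β, γ : [0,∞) → ℝ be continuous functions with α(t) = β(t) + γ(t) for all t, where α is nonnegative, β is strictly positive, γ is of finite variation on compacts with γ(0) = 0, and γ is flat off the zero set of α in the sense that ∫₀^∞ 1_{α(t)>0} dγ(t) = 0. Then γ(t) = 0 and α(t) = β(t) for all t ≥ 0. -/
/-!
The zero set of `γ` in `[0, t]` is closed and contains `0`. At a zero `s` of `γ` we have
`α s = β s > 0`, so by continuity `α > 0` on a right neighbourhood of `s`, where flatness keeps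
`γ` equal to `γ s = 0`. A closed set with this right-propagation property contains all of `[0, t]`.
-/

open Set Filter Topology

section Flat

variable {α γ : ℝ → ℝ} {a : ℝ}

theorem eventually_eq_of_flat
    (hflat : ∀ s u : ℝ, a ≤ s → s ≤ u → (∀ t ∈ Icc s u, 0 < α t) → γ u = γ s)
    {s : ℝ} (hs : a ≤ s) (hα : ∀ᶠ t in 𝓝[≥] s, 0 < α t) :
    ∀ᶠ t in 𝓝[>] s, γ t = γ s := by
  obtain ⟨u, hsu, hIco⟩ := mem_nhdsGE_iff_exists_Ico_subset.1 hα
  filter_upwards [Ioo_mem_nhdsGT hsu] with t ht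
  exact hflat s t hs ht.1.le fun v hv => hIco ⟨hv.1, hv.2.trans_lt ht.2⟩

theorem eq_zero_of_flat (hα : ContinuousOn α (Ici a)) (hγ : ContinuousOn γ (Ici a))
    (hγa : γ a = 0)
    (hflat : ∀ s u : ℝ, a ≤ s → s ≤ u → (∀ t ∈ Icc s u, 0 < α t) → γ u = γ s)
    (hpos : ∀ s, a ≤ s → γ s = 0 → 0 < α s) {t : ℝ} (ht : a ≤ t) : γ t = 0 := by
  have hclosed : IsClosed (γ ⁻¹' {0} ∩ Icc a t) := by
    rw [inter_comm]
    exact (hγ.mono Icc_subset_Ici_self).preimage_isClosed_of_isClosed isClosed_Icc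
      isClosed_singleton
  have hzero : Icc a t ⊆ γ ⁻¹' {0} := by
    refine hclosed.Icc_subset_of_forall_mem_nhdsWithin hγa fun s ⟨hγs, has, _⟩ => ?_
    have hαs : ∀ᶠ v in 𝓝[≥] s, 0 < α v :=
      ((hα s has).mono (Ici_subset_Ici.2 has)).eventually_const_lt (hpos s has hγs)
    filter_upwards [eventually_eq_of_flat hflat has hαs] with v hv
    exact hv.trans hγs
  exact hzero ⟨ht, le_rfl⟩

end Flat

theorem stmt_0_general (α β γ : ℝ → ℝ)
    (hα_cont : ContinuousOn α (Set.Ici 0))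
    (hγ_cont : ContinuousOn γ (Set.Ici 0))
    (hdecomp : ∀ t, 0 ≤ t → α t = β t + γ t)
    (hβ_pos : ∀ t, 0 ≤ t → 0 < β t)
    (hγ0 : γ 0 = 0)
    (hflat : ∀ a b : ℝ, 0 ≤ a → a ≤ b → (∀ t ∈ Set.Icc a b, 0 < α t) → γ b = γ a) :
    ∀ t, 0 ≤ t → γ t = 0 ∧ α t = β t := by
  have hα_eq : ∀ t, 0 ≤ t → γ t = 0 → α t = β t := fun t ht hγt => by
    rw [hdecomp t ht, hγt, add_zero]
  intro t ht
  have hγt : γ t = 0 := eq_zero_of_flat hα_cont hγ_cont hγ0 hflat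
    (fun s hs hγs => hα_eq s hs hγs ▸ hβ_pos s hs) ht
  exact ⟨hγt, hα_eq t ht hγt⟩

/-- Skorokhod-type lemma: if a nonnegative continuous function `α = β + γ` on `[0,∞)` has a
strictly positive continuous part `β` and a finite-variation part `γ` with `γ(0) = 0` which
is flat off the zero set of `α`, then `γ ≡ 0` and `α ≡ β` on `[0,∞)`. -/
theorem stmt_0 (α β γ : ℝ → ℝ)
    (hα_cont : ContinuousOn α (Set.Ici 0))
    (hβ_cont : ContinuousOn β (Set.Ici 0))
    (hγ_cont : ContinuousOn γ (Set.Ici 0))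
    (hdecomp : ∀ t, 0 ≤ t → α t = β t + γ t)
    (hα_nonneg : ∀ t, 0 ≤ t → 0 ≤ α t)
    (hβ_pos : ∀ t, 0 ≤ t → 0 < β t)
    (hγ_bv : LocallyBoundedVariationOn γ (Set.Ici 0))
    (hγ0 : γ 0 = 0)
    (hflat : ∀ a b : ℝ, 0 ≤ a → a ≤ b → (∀ t ∈ Set.Icc a b, 0 < α t) → γ b = γ a) :
    ∀ t, 0 ≤ t → γ t = 0 ∧ α t = β t :=
  stmt_0_general α β γ hα_cont hγ_cont hdecomp hβ_pos hγ0 hflat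
end

section
/- Suppose A(x) = α I_n + β D D′ + 𝔥𝔥′ diag(γ) for constants α, β ∈ ℝ and γ ∈ ℝⁿ, where 𝔥 is the all-ones vector and D is the n×3 matrix with columns d₁,d₂,d₃ as above. Then for every x with D D′ x ≠ 0, R̃(x) := trace(D′ A D) · (x′ D D′ x) / (x′ D D′ A D D′ x) = 2. -/
open Matrix

/-! Write `P = D Dᵀ`. From `𝔥ᵀ D = 0` and `D Dᵀ D Dᵀ = 3 D Dᵀ` we get `P² = 3P` and `P 𝔥𝔥ᵀ = 0`,
so `P A P = (3α + 9β) P` and `tr (Dᵀ A D) = tr (P A) = (α + 3β) tr P = 6 (α + 3β)`. The quotient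
is therefore `tr P / 3 = 2`; in general `P² = cP` and `P N = 0` give `R̃ = tr P / c`. -/

/-- The `n × 3` matrix with columns `d₁ = (1,-1,0,…,0)ᵀ`, `d₂ = (0,1,-1,0,…,0)ᵀ`,
`d₃ = (-1,0,1,0,…,0)ᵀ`. -/
def Dmat (n : ℕ) : Matrix (Fin n) (Fin 3) ℝ :=
  Matrix.of fun i j =>
    if j = 0 then (if (i : ℕ) = 0 then 1 else if (i : ℕ) = 1 then -1 else 0)
    else if j = 1 then (if (i : ℕ) = 1 then 1 else if (i : ℕ) = 2 then -1 else 0)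
    else (if (i : ℕ) = 0 then -1 else if (i : ℕ) = 2 then 1 else 0)

section QuasiIdempotent

variable {ι R : Type*} [Fintype ι] [DecidableEq ι]

theorem mul_smul_one_add_smul_add_mul_eq_smul [CommRing R] {P N : Matrix ι ι R} {c : R}
    (hP : P * P = c • P) (hN : P * N = 0) (α β : R) :
    P * (α • 1 + β • P + N) * P = (α * c + β * c ^ 2) • P := by
  rw [Matrix.mul_add, Matrix.mul_add, hN, add_zero, Matrix.mul_smul, Matrix.mul_one,
    Matrix.mul_smul, Matrix.add_mul, Matrix.smul_mul, Matrix.smul_mul, hP, Matrix.smul_mul,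
    hP, smul_smul, smul_smul, smul_smul, ← add_smul]
  ring_nf

theorem trace_mul_smul_one_add_smul_add [CommRing R] {P N : Matrix ι ι R} {c : R}
    (hP : P * P = c • P) (hN : P * N = 0) (α β : R) :
    (P * (α • 1 + β • P + N)).trace = (α + β * c) * P.trace := by
  rw [Matrix.mul_add, Matrix.mul_add, hN, add_zero, Matrix.mul_smul, Matrix.mul_one,
    Matrix.mul_smul, hP, trace_add, trace_smul, trace_smul, trace_smul, smul_eq_mul,
    smul_eq_mul, smul_eq_mul]
  ring

theorem trace_mul_dotProduct_div_eq_trace_div [Field R] {P N : Matrix ι ι R} {c : R}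
    (hP : P * P = c • P) (hN : P * N = 0) (α β : R) (x : ι → R)
    (hden : x ⬝ᵥ (P * (α • 1 + β • P + N) * P) *ᵥ x ≠ 0) :
    (P * (α • 1 + β • P + N)).trace * (x ⬝ᵥ P *ᵥ x) /
        (x ⬝ᵥ (P * (α • 1 + β • P + N) * P) *ᵥ x) = P.trace / c := by
  rw [mul_smul_one_add_smul_add_mul_eq_smul hP hN, smul_mulVec, dotProduct_smul,
    smul_eq_mul] at hden ⊢
  rw [trace_mul_smul_one_add_smul_add hP hN]
  have hc : c ≠ 0 := by rintro rfl; simp at hden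
  have hq : x ⬝ᵥ P *ᵥ x ≠ 0 := right_ne_zero_of_mul hden
  have hαβ : α + β * c ≠ 0 := by
    intro h; apply hden; linear_combination (x ⬝ᵥ P *ᵥ x) * c * h
  field_simp

end QuasiIdempotent

theorem Fin.sum_eq_of_apply_eq_zero_of_three_le {M : Type*} [AddCommMonoid M] {n : ℕ}
    (hn : 3 ≤ n) (f : Fin n → M)
    (h : ∀ i : Fin n, 3 ≤ (i : ℕ) → f i = 0) :
    ∑ i, f i = f ⟨0, by omega⟩ + f ⟨1, by omega⟩ + f ⟨2, by omega⟩ := by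
  rw [← Finset.sum_subset (Finset.subset_univ
      {(⟨0, by omega⟩ : Fin n), ⟨1, by omega⟩, ⟨2, by omega⟩}), Finset.sum_insert,
    Finset.sum_insert, Finset.sum_singleton, add_assoc]
  · simp [Fin.ext_iff]
  · simp [Fin.ext_iff]
  · intro i _ hi
    simp only [Finset.mem_insert, Finset.mem_singleton, Fin.ext_iff] at hi
    exact h i (by omega)

theorem Dmat_apply_of_three_le {n : ℕ} (i : Fin n) (hi : 3 ≤ (i : ℕ)) (j : Fin 3) :
    Dmat n i j = 0 := by
  simp only [Dmat, Matrix.of_apply]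
  split_ifs <;> first | rfl | omega

theorem transpose_Dmat_mul_ones {n : ℕ} (hn : 3 ≤ n) :
    (Dmat n)ᵀ * (Matrix.of fun _ _ => (1 : ℝ) : Matrix (Fin n) (Fin n) ℝ) = 0 := by
  ext j i
  simp only [mul_apply, transpose_apply, of_apply, mul_one, Matrix.zero_apply]
  rw [Fin.sum_eq_of_apply_eq_zero_of_three_le hn _ (fun k hk => Dmat_apply_of_three_le k hk j)]
  fin_cases j <;> simp [Dmat]

theorem transpose_Dmat_mul_Dmat {n : ℕ} (hn : 3 ≤ n) :
    (Dmat n)ᵀ * Dmat n = (3 : ℝ) • (1 : Matrix (Fin 3) (Fin 3) ℝ) - Matrix.of fun _ _ => 1 := by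
  ext j k
  simp only [mul_apply, transpose_apply]
  rw [Fin.sum_eq_of_apply_eq_zero_of_three_le hn _
    (fun i hi => by rw [Dmat_apply_of_three_le i hi j, zero_mul])]
  fin_cases j <;> fin_cases k <;> simp [Dmat, one_apply] <;> norm_num

theorem ones_mul_transpose_Dmat (n : ℕ) :
    (Matrix.of fun _ _ => (1 : ℝ) : Matrix (Fin 3) (Fin 3) ℝ) * (Dmat n)ᵀ = 0 := by
  ext j i
  simp only [mul_apply, transpose_apply, of_apply, one_mul, Matrix.zero_apply, Fin.sum_univ_three,
    Dmat]
  split_ifs <;> norm_num <;> omega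

theorem Dmat_mul_transpose_mul_self {n : ℕ} (hn : 3 ≤ n) :
    Dmat n * (Dmat n)ᵀ * (Dmat n * (Dmat n)ᵀ) = (3 : ℝ) • (Dmat n * (Dmat n)ᵀ) := by
  rw [Matrix.mul_assoc, ← Matrix.mul_assoc (Dmat n)ᵀ, transpose_Dmat_mul_Dmat hn,
    Matrix.sub_mul, Matrix.smul_mul, Matrix.one_mul, ones_mul_transpose_Dmat, sub_zero,
    Matrix.mul_smul]

theorem trace_Dmat_mul_transpose {n : ℕ} (hn : 3 ≤ n) : (Dmat n * (Dmat n)ᵀ).trace = 6 := by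
  rw [trace_mul_comm, transpose_Dmat_mul_Dmat hn]
  norm_num [trace]

theorem stmt_7_general (n : ℕ) (hn : 3 ≤ n) (α β : ℝ) (γ : Fin n → ℝ)
    (A : Matrix (Fin n) (Fin n) ℝ)
    (hAdef : A = α • (1 : Matrix (Fin n) (Fin n) ℝ) + β • (Dmat n * (Dmat n)ᵀ) +
      (Matrix.of fun _ _ => (1 : ℝ)) * Matrix.diagonal γ)
    (x : Fin n → ℝ)
    (hden : x ⬝ᵥ (Dmat n * (Dmat n)ᵀ * A * (Dmat n * (Dmat n)ᵀ)).mulVec x ≠ 0) :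
    ((Dmat n)ᵀ * A * Dmat n).trace * (x ⬝ᵥ (Dmat n * (Dmat n)ᵀ).mulVec x) /
        (x ⬝ᵥ (Dmat n * (Dmat n)ᵀ * A * (Dmat n * (Dmat n)ᵀ)).mulVec x) = 2 := by
  have hN : Dmat n * (Dmat n)ᵀ * ((Matrix.of fun _ _ => (1 : ℝ)) * diagonal γ) = 0 := by
    rw [Matrix.mul_assoc, ← Matrix.mul_assoc (Dmat n)ᵀ, transpose_Dmat_mul_ones hn,
      Matrix.zero_mul, Matrix.mul_zero]
  have htrace : ((Dmat n)ᵀ * A * Dmat n).trace = (Dmat n * (Dmat n)ᵀ * A).trace := by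
    rw [trace_mul_comm, ← Matrix.mul_assoc]
  subst hAdef
  rw [htrace, trace_mul_dotProduct_div_eq_trace_div (Dmat_mul_transpose_mul_self hn) hN α β x hden,
    trace_Dmat_mul_transpose hn]
  norm_num

/-- If `A = α Iₙ + β D D′ + 𝔥𝔥′ diag(γ)` (with `𝔥` the all-ones vector), then for every `x`
with `D D′ x ≠ 0` (and nonzero denominator), `R̃(x) = 2`. -/
theorem stmt_7 (n : ℕ) (hn : 3 ≤ n) (α β : ℝ) (γ : Fin n → ℝ)
    (A : Matrix (Fin n) (Fin n) ℝ)
    (hAdef : A = α • (1 : Matrix (Fin n) (Fin n) ℝ) + β • (Dmat n * (Dmat n)ᵀ) +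
      (Matrix.of fun _ _ => (1 : ℝ)) * Matrix.diagonal γ)
    (x : Fin n → ℝ) (hx : (Dmat n * (Dmat n)ᵀ).mulVec x ≠ 0)
    (hden : x ⬝ᵥ (Dmat n * (Dmat n)ᵀ * A * (Dmat n * (Dmat n)ᵀ)).mulVec x ≠ 0) :
    ((Dmat n)ᵀ * A * Dmat n).trace * (x ⬝ᵥ (Dmat n * (Dmat n)ᵀ).mulVec x) /
        (x ⬝ᵥ (Dmat n * (Dmat n)ᵀ * A * (Dmat n * (Dmat n)ᵀ)).mulVec x) = 2 :=
  stmt_7_general n hn α β γ A hAdef x hden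
end

section
/- Let 𝔄 be the (n−1)×(n−1) symmetric tridiagonal matrix with diagonal entries 𝔄_{kk} = σ̃_k² + σ̃_{k+1}² and off-diagonal entries 𝔄_{k,k+1} = 𝔄_{k+1,k} = −σ̃_{k+1}², where σ̃₁,…,σ̃_n > 0. Let 𝔇 = diag(𝔄) and let 𝔔 be the (n−1)×(n−1) matrix with entries 1/2 on the first super- and sub-diagonal and 0 elsewhere. Then the skew-symmetry identity 2𝔇 − 𝔔𝔇 − 𝔇𝔔 − 2𝔄 = 0 holds if and only if the variances grow linearly: σ̃₂² − σ̃₁² = σ̃₃² − σ̃₂² = ⋯ = σ̃_n² − σ̃_{n−1}². -/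
open Matrix

/-- The `(n−1)×(n−1)` symmetric tridiagonal covariance matrix `𝔄` with diagonal entries
`σ̃ₖ² + σ̃ₖ₊₁²` and off-diagonal entries `−σ̃ₖ₊₁²` (here `m = n−1`). -/
def Amat (m : ℕ) (σ : Fin (m + 1) → ℝ) : Matrix (Fin m) (Fin m) ℝ :=
  Matrix.of fun k l =>
    if k = l then σ k.castSucc ^ 2 + σ k.succ ^ 2
    else if (l : ℕ) = (k : ℕ) + 1 then -(σ k.succ ^ 2)
    else if (k : ℕ) = (l : ℕ) + 1 then -(σ k.castSucc ^ 2)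
    else 0

/-- The matrix `𝔔` with entries `1/2` on the first super- and sub-diagonals. -/
noncomputable def Qmat (m : ℕ) : Matrix (Fin m) (Fin m) ℝ :=
  Matrix.of fun k l =>
    if (l : ℕ) = (k : ℕ) + 1 ∨ (k : ℕ) = (l : ℕ) + 1 then (1 / 2 : ℝ) else 0

/-! The defect `2𝔇 − 𝔔𝔇 − 𝔇𝔔 − 2𝔄` is tridiagonal with zero diagonal, and its entry at `(k, k+1)`
is half the difference of the consecutive increments `σ̃ₖ₊₁² − σ̃ₖ²` and `σ̃ₖ₊₂² − σ̃ₖ₊₁²`. So it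
vanishes exactly when consecutive increments agree, i.e. when the increments are constant. -/

theorem Fin.apply_eq_apply_of_forall_val_eq_succ {α : Type*} {m : ℕ} {f : Fin m → α}
    (h : ∀ k l : Fin m, (l : ℕ) = k + 1 → f k = f l) (k l : Fin m) : f k = f l := by
  cases m with
  | zero => exact k.elim0
  | succ n =>
    have eq_zero : ∀ k : Fin (n + 1), f k = f 0 := by
      intro k
      induction k using Fin.induction with
      | zero => rfl
      | succ i ih => rw [← ih, h i.castSucc i.succ (by simp)]
    rw [eq_zero k, eq_zero l]

section SkewSymmetryDefect

variable {ι R : Type*} [Fintype ι] [DecidableEq ι] [CommRing R]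

def skewSymmetryDefect (A Q : Matrix ι ι R) : Matrix ι ι R :=
  2 • diagonal (fun k => A k k) - Q * diagonal (fun k => A k k) -
    diagonal (fun k => A k k) * Q - 2 • A

theorem skewSymmetryDefect_apply (A Q : Matrix ι ι R) (k l : ι) :
    skewSymmetryDefect A Q k l =
      (if k = l then 2 * A k k else 0) - Q k l * (A k k + A l l) - 2 * A k l := by
  simp only [skewSymmetryDefect, two_nsmul, Matrix.sub_apply, Matrix.add_apply, mul_diagonal,
    diagonal_mul, diagonal_apply]
  split_ifs <;> ring

end SkewSymmetryDefect

section Tridiagonal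

variable {m : ℕ} (σ : Fin (m + 1) → ℝ)

def varIncrement (k : Fin m) : ℝ := σ k.succ ^ 2 - σ k.castSucc ^ 2

theorem Amat_apply_self (k : Fin m) : Amat m σ k k = σ k.castSucc ^ 2 + σ k.succ ^ 2 := by
  simp [Amat]

theorem skewSymmetryDefect_Amat_self (k : Fin m) :
    skewSymmetryDefect (Amat m σ) (Qmat m) k k = 0 := by
  simp [skewSymmetryDefect_apply, Qmat]

theorem skewSymmetryDefect_Amat_of_val_eq_succ {k l : Fin m} (hkl : (l : ℕ) = k + 1) :
    skewSymmetryDefect (Amat m σ) (Qmat m) k l = (varIncrement σ k - varIncrement σ l) / 2 := by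
  have hne : k ≠ l := fun h => by subst h; omega
  have hsucc : l.castSucc = k.succ := Fin.ext (by simp [hkl])
  have hA : Amat m σ k l = -(σ k.succ ^ 2) := by simp [Amat, hne, hkl]
  have hQ : Qmat m k l = 1 / 2 := by simp [Qmat, hkl]
  rw [skewSymmetryDefect_apply, if_neg hne, hA, hQ, Amat_apply_self, Amat_apply_self,
    varIncrement, varIncrement, hsucc]
  ring

theorem skewSymmetryDefect_Amat_of_eq_val_succ {k l : Fin m} (hkl : (k : ℕ) = l + 1) :
    skewSymmetryDefect (Amat m σ) (Qmat m) k l = (varIncrement σ l - varIncrement σ k) / 2 := by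
  have hne : k ≠ l := fun h => by subst h; omega
  have hlk : (l : ℕ) ≠ k + 1 := by omega
  have hsucc : k.castSucc = l.succ := Fin.ext (by simp [hkl])
  have hA : Amat m σ k l = -(σ k.castSucc ^ 2) := by
    rw [Amat, of_apply, if_neg hne, if_neg hlk, if_pos hkl]
  have hQ : Qmat m k l = 1 / 2 := by simp [Qmat, hkl]
  rw [skewSymmetryDefect_apply, if_neg hne, hA, hQ, Amat_apply_self, Amat_apply_self,
    varIncrement, varIncrement, hsucc]
  ring

theorem skewSymmetryDefect_Amat_of_not_adjacent {k l : Fin m} (hne : k ≠ l)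
    (hkl : (l : ℕ) ≠ k + 1) (hlk : (k : ℕ) ≠ l + 1) :
    skewSymmetryDefect (Amat m σ) (Qmat m) k l = 0 := by
  simp [skewSymmetryDefect_apply, Qmat, Amat, hne, hkl, hlk]

theorem skewSymmetryDefect_Amat_eq_zero_iff :
    skewSymmetryDefect (Amat m σ) (Qmat m) = 0 ↔
      ∀ k l : Fin m, (l : ℕ) = k + 1 → varIncrement σ k = varIncrement σ l := by
  constructor
  · intro h k l hkl
    have := congr_fun₂ h k l
    rw [skewSymmetryDefect_Amat_of_val_eq_succ σ hkl, Matrix.zero_apply] at this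
    linarith
  · intro h
    ext k l
    rw [Matrix.zero_apply]
    by_cases hne : k = l
    · rw [hne, skewSymmetryDefect_Amat_self]
    by_cases hkl : (l : ℕ) = k + 1
    · rw [skewSymmetryDefect_Amat_of_val_eq_succ σ hkl, h k l hkl, sub_self, zero_div]
    by_cases hlk : (k : ℕ) = l + 1
    · rw [skewSymmetryDefect_Amat_of_eq_val_succ σ hlk, h l k hlk, sub_self, zero_div]
    exact skewSymmetryDefect_Amat_of_not_adjacent σ hne hkl hlk

end Tridiagonal

theorem stmt_12_general (m : ℕ) (σ : Fin (m + 1) → ℝ) :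
    (2 • Matrix.diagonal (fun k : Fin m => Amat m σ k k) -
          Qmat m * Matrix.diagonal (fun k : Fin m => Amat m σ k k) -
          Matrix.diagonal (fun k : Fin m => Amat m σ k k) * Qmat m -
          2 • Amat m σ = 0) ↔
      (∀ k l : Fin m, σ k.succ ^ 2 - σ k.castSucc ^ 2 = σ l.succ ^ 2 - σ l.castSucc ^ 2) := by
  change skewSymmetryDefect (Amat m σ) (Qmat m) = 0 ↔ ∀ k l, varIncrement σ k = varIncrement σ l
  rw [skewSymmetryDefect_Amat_eq_zero_iff]
  exact ⟨Fin.apply_eq_apply_of_forall_val_eq_succ, fun h k l _ => h k l⟩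

/-- The skew-symmetry identity `2𝔇 − 𝔔𝔇 − 𝔇𝔔 − 2𝔄 = 0` holds iff the variances grow
linearly: `σ̃₂² − σ̃₁² = σ̃₃² − σ̃₂² = ⋯ = σ̃ₙ² − σ̃ₙ₋₁²`. -/
theorem stmt_12 (m : ℕ) (hm : 2 ≤ m) (σ : Fin (m + 1) → ℝ) (hσ : ∀ i, 0 < σ i) :
    (2 • Matrix.diagonal (fun k : Fin m => Amat m σ k k) -
          Qmat m * Matrix.diagonal (fun k : Fin m => Amat m σ k k) -
          Matrix.diagonal (fun k : Fin m => Amat m σ k k) * Qmat m -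
          2 • Amat m σ = 0) ↔
      (∀ k l : Fin m, σ k.succ ^ 2 - σ k.castSucc ^ 2 = σ l.succ ^ 2 - σ l.castSucc ^ 2) :=
  stmt_12_general m σ
end
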